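/- arXiv:2208.00432 — 2 statements merged into one kernel-verified Lean document; each statement's English description precedes it below -/
import Mathlib

section
/- For each 0 ≤ s ≤ q − n, the dimension over F of the space of functions SJ(n,q) → F that are restrictions of polynomials of total degree at most s equals C(n+s, s). -/
/-!
Evaluation at the points `a ∘ v`, `v : Fin n → Fin m` strictly increasing, is injective on
polynomials of total degree `d` as soon as `d + n ≤ m`. By induction on `n` and `m`: write
`p = (X 0 - C (a 0)) * g + r` with `r` free of `X 0`. Then `r` vanishes at the points with
`v 0 = 0`, which form the same configuration in one variable less, so `r = 0`; and `g` has degree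
`d - 1` and vanishes at the points with `v 0 > 0`, which form the same configuration for
`a ∘ Fin.succ`, so `g = 0`. The dimension is therefore that of the polynomials of degree at most
`s` in `n` variables, i.e. the number of monomials, `(n + s).choose s`.
-/

open MvPolynomial

namespace MvPolynomial

theorem totalDegree_aeval_le {σ τ R : Type*} [CommSemiring R] (f : σ → MvPolynomial τ R)
    (hf : ∀ i, (f i).totalDegree ≤ 1) (p : MvPolynomial σ R) :
    (aeval f p).totalDegree ≤ p.totalDegree := by
  classical
  conv_lhs => rw [p.as_sum, map_sum]
  refine totalDegree_finsetSum_le fun d hd => ?_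
  rw [aeval_monomial]
  calc (algebraMap R _ (coeff d p) * d.prod fun i k => f i ^ k).totalDegree
      ≤ ∑ i ∈ d.support, (f i ^ d i).totalDegree := by
        refine (totalDegree_mul _ _).trans ?_
        rw [algebraMap_eq, totalDegree_C, zero_add]
        exact totalDegree_finsetProd _ _
    _ ≤ ∑ i ∈ d.support, d i := by
        refine Finset.sum_le_sum fun i _ => (totalDegree_pow _ _).trans ?_
        simpa using Nat.mul_le_mul_left (d i) (hf i)
    _ ≤ p.totalDegree := le_totalDegree hd

theorem exists_eq_X_sub_C_mul_add_rename_succ {R : Type*} [CommRing R] {n : ℕ}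
    (p : MvPolynomial (Fin (n + 1)) R) (c : R) :
    ∃ g r, p = (X 0 - C c) * g + rename Fin.succ r ∧ r.totalDegree ≤ p.totalDegree := by
  set r := aeval (Fin.cons (C c) X : Fin (n + 1) → MvPolynomial (Fin n) R) p
  have hr : r.totalDegree ≤ p.totalDegree := by
    refine totalDegree_aeval_le _ (fun j => ?_) p
    refine Fin.cases ?_ (fun k => ?_) j
    · simp
    · simpa [X] using totalDegree_monomial_le (Finsupp.single k 1) (1 : R)
  suffices X 0 - C c ∣ p - rename Fin.succ r by
    obtain ⟨g, hg⟩ := this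
    exact ⟨g, r, by rw [← hg, sub_add_cancel], hr⟩
  set I := Ideal.span {(X 0 - C c : MvPolynomial (Fin (n + 1)) R)}
  -- Substituting `C c` for `X 0` does not change the class modulo `X 0 - C c`.
  have hX : (Ideal.Quotient.mkₐ R I).comp ((rename Fin.succ).comp
      (aeval (Fin.cons (C c) X : Fin (n + 1) → MvPolynomial (Fin n) R))) =
      Ideal.Quotient.mkₐ R I := by
    refine algHom_ext fun j => Fin.cases ?_ (fun k => ?_) j
    · simp only [AlgHom.comp_apply, aeval_X, Fin.cons_zero, rename_C, Ideal.Quotient.mkₐ_eq_mk]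
      exact (Ideal.Quotient.eq.mpr (Ideal.mem_span_singleton_self _)).symm
    · simp
  rw [← Ideal.mem_span_singleton, ← Ideal.Quotient.eq]
  exact (DFunLike.congr_fun hX p).symm

theorem eq_zero_of_eval_comp_strictMono_eq_zero {R : Type*} [CommRing R] [IsDomain R]
    {n m : ℕ} {a : Fin m → R} (ha : Function.Injective a) {p : MvPolynomial (Fin n) R}
    (hp : p.totalDegree + n ≤ m)
    (hvan : ∀ v : Fin n → Fin m, StrictMono v → eval (a ∘ v) p = 0) : p = 0 := by
  induction n generalizing m with
  | zero =>
    have h := hvan finZeroElim fun i => i.elim0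
    rw [eq_C_of_isEmpty p, eval_C] at h
    rw [eq_C_of_isEmpty p, h, map_zero]
  | succ n ihn =>
    induction m generalizing p with
    | zero => omega
    | succ m ihm =>
      obtain ⟨g, r, rfl, hr⟩ := exists_eq_X_sub_C_mul_add_rename_succ p (a 0)
      have hr0 : r = 0 := by
        refine ihn (ha.comp (Fin.succ_injective _)) (by omega) fun v hv => ?_
        have h := hvan (Fin.cons 0 (Fin.succ ∘ v))
          (Fin.strictMono_cons.mpr ⟨fun j => Fin.succ_pos _, Fin.strictMono_succ.comp hv⟩)
        simpa [eval_rename, Function.comp_def] using h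
      subst hr0
      rw [map_zero, add_zero] at hvan hp ⊢
      by_contra hg
      have hdegX : (X 0 - C (a 0) : MvPolynomial (Fin (n + 1)) R).totalDegree = 1 := by
        rw [sub_eq_add_neg, ← C_neg, totalDegree_add_eq_left_of_totalDegree_lt] <;> simp
      have hX : (X 0 - C (a 0) : MvPolynomial (Fin (n + 1)) R) ≠ 0 := by
        rintro h
        simp [h] at hdegX
      rw [totalDegree_mul_of_isDomain hX (right_ne_zero_of_mul hg), hdegX] at hp
      refine hg (mul_eq_zero_of_right _ (ihm (ha.comp (Fin.succ_injective _)) (by omega)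
        fun w hw => ?_))
      have h := hvan (Fin.succ ∘ w) (Fin.strictMono_succ.comp hw)
      have ha0 : a (Fin.succ (w 0)) - a 0 ≠ 0 := sub_ne_zero.mpr (ha.ne (Fin.succ_ne_zero _))
      simpa [ha0, Function.comp_def] using h

end MvPolynomial

def finSumLeEquivSumEq (n s : ℕ) :
    {f : Fin n → ℕ // ∑ j, f j ≤ s} ≃ {g : Fin (n + 1) → ℕ // ∑ j, g j = s} where
  toFun f := ⟨Fin.cons (s - ∑ j, f.1 j) f.1, by rw [Fin.sum_cons]; have := f.2; omega⟩
  invFun g := ⟨Fin.tail g.1, by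
    have := g.2
    rw [Fin.sum_univ_succ] at this
    simp only [Fin.tail]
    omega⟩
  left_inv f := by simp
  right_inv := by
    rintro ⟨g, hg⟩
    rw [Fin.sum_univ_succ] at hg
    ext1
    dsimp only
    rw [show s - ∑ j, Fin.tail g j = g 0 by simp only [Fin.tail]; omega, Fin.cons_self_tail]

theorem Finsupp.card_sum_le_eq_choose (n s : ℕ) :
    Nat.card {d : Fin n →₀ ℕ // (d.sum fun _ e => e) ≤ s} = (n + s).choose s := by
  have e : {d : Fin n →₀ ℕ // (d.sum fun _ e => e) ≤ s} ≃ Sym (Fin (n + 1)) s :=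
    (Finsupp.equivFunOnFinite.subtypeEquiv fun d => by
      rw [Finsupp.sum_fintype _ _ fun _ => rfl]; rfl).trans
    ((finSumLeEquivSumEq n s).trans (Sym.equivNatSumOfFintype (Fin (n + 1)) s).symm)
  rw [Nat.card_congr e, Nat.card_eq_fintype_card, Sym.card_sym_eq_choose, Fintype.card_fin,
    Nat.add_right_comm, Nat.add_sub_cancel]

namespace MvPolynomial

theorem finrank_restrictTotalDegree (R : Type*) [CommRing R] [StrongRankCondition R] (n s : ℕ) :
    Module.finrank R (restrictTotalDegree (Fin n) R s) = (n + s).choose s := by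
  rw [restrictTotalDegree, Module.finrank_eq_nat_card_basis (basisRestrictSupport R _)]
  exact Finsupp.card_sum_le_eq_choose n s

theorem finrank_span_eq_finrank_restrictTotalDegree {σ R : Type*} [CommRing R]
    [StrongRankCondition R] (S : Set (σ → R)) (s : ℕ)
    (hS : ∀ p : MvPolynomial σ R, p.totalDegree ≤ s →
      (∀ x ∈ S, eval x p = 0) → p = 0) :
    Module.finrank R (Submodule.span R {f : S → R | ∃ p : MvPolynomial σ R,
      p.totalDegree ≤ s ∧ ∀ x : S, f x = eval x.1 p}) =
      Module.finrank R (restrictTotalDegree σ R s) := by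
  let L : restrictTotalDegree σ R s →ₗ[R] (S → R) :=
    LinearMap.pi (fun x : S => (aeval x.1).toLinearMap) ∘ₗ
      (restrictTotalDegree σ R s).subtype
  have hL : ∀ p x, L p x = eval x.1 p.1 := fun p x => by simp [L]
  have hrange : {f : S → R | ∃ p : MvPolynomial σ R, p.totalDegree ≤ s ∧
      ∀ x : S, f x = eval x.1 p} = LinearMap.range L := by
    ext f
    rw [SetLike.mem_coe, LinearMap.mem_range]
    constructor
    · rintro ⟨p, hp, hf⟩
      let p' : restrictTotalDegree σ R s := ⟨p, (mem_restrictTotalDegree _ _ _).mpr hp⟩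
      refine ⟨p', ?_⟩
      ext x
      exact (hL p' x).trans (hf x).symm
    · rintro ⟨p, rfl⟩
      exact ⟨p.1, (mem_restrictTotalDegree _ _ _).mp p.2, fun x => hL p x⟩
  have hinj : Function.Injective L := by
    rw [← LinearMap.ker_eq_bot, LinearMap.ker_eq_bot']
    exact fun p hp => Subtype.ext <| hS p.1 ((mem_restrictTotalDegree _ _ _).mp p.2)
      fun x hx => (hL p ⟨x, hx⟩).symm.trans (congr_fun hp ⟨x, hx⟩)
  rw [hrange, Submodule.span_eq, LinearMap.finrank_range_of_inj hinj]

end MvPolynomial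

theorem stmt_8_general {F : Type*} [Field F] (n q : ℕ) (hnq : n ≤ q)
    (i : Fin q → F) (hi : Function.Injective i) (s : ℕ) (hs : s ≤ q - n) :
    let SJ : Set (Fin n → F) :=
      {x | ∃ v : Fin n → Fin q, StrictMono v ∧ x = fun j => i (v j)}
    Module.finrank F (Submodule.span F
      {f : SJ → F | ∃ p : MvPolynomial (Fin n) F, p.totalDegree ≤ s ∧
        ∀ x : SJ, f x = MvPolynomial.eval x.1 p}) = (n + s).choose s := by
  intro SJ
  rw [finrank_span_eq_finrank_restrictTotalDegree SJ s, finrank_restrictTotalDegree]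
  exact fun p hp hvan =>
    eq_zero_of_eval_comp_strictMono_eq_zero hi (by omega) fun v hv => hvan _ ⟨v, hv, rfl⟩

theorem stmt_8 {F : Type*} [Field F] (n q : ℕ) (hn : 1 ≤ n) (hnq : n ≤ q)
    (i : Fin q → F) (hi : Function.Injective i) (s : ℕ) (hs : s ≤ q - n) :
    let SJ : Set (Fin n → F) :=
      {x | ∃ v : Fin n → Fin q, StrictMono v ∧ x = fun j => i (v j)}
    Module.finrank F (Submodule.span F
      {f : SJ → F | ∃ p : MvPolynomial (Fin n) F, p.totalDegree ≤ s ∧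
        ∀ x : SJ, f x = MvPolynomial.eval x.1 p}) = (n + s).choose s :=
  stmt_8_general n q hnq i hi s hs
end

section
/- For every s ∈ J(n,q) there exists a unique polynomial P_s ∈ F[x_1,...,x_n] of degree q − 1 that is an F-linear combination of monomials of degree at most q − 1, with P_s(s) = 1 and P_s(w) = 0 for all w ∈ J(n,q), w ≠ s. Moreover, no polynomial of degree less than q − 1 has these interpolation values. -/
/-!
For monotone `s`, the polynomial `∏ⱼ ∏_{s (j-1) ≤ u < s j} (xⱼ - i u)` has degree at
most `s (n-1) ≤ q - 1`, does not vanish at `s`, and vanishes at every monotone `w` that does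
not dominate `s` coordinatewise. These polynomials are therefore triangular with respect to the
dominance order on `J(n,q)`, so every indicator function of a point of `J(n,q)` is a linear
combination of them.

Uniqueness: a polynomial of degree `< q - a` vanishing at all monotone sequences with
entries `≥ a` vanishes on the slice `x₀ = i a` (induction on `n`), so it is `(x₀ - i a) * P'`,
and since `i` is injective `P'` vanishes at all monotone sequences with entries `≥ a + 1`.

Minimality: if `P` interpolated the indicator of `s` with degree `< q - 1`, then
`(x₀ - i (s 0)) * P` would have degree `< q` and vanish on all of `J(n,q)`, hence be zero.
-/

theorem Pi.single_mem_span_of_triangular {ι K : Type*} [Field K] [Fintype ι] [DecidableEq ι]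
    [PartialOrder ι] (f : ι → ι → K) (hdiag : ∀ s, f s s ≠ 0)
    (htri : ∀ s w, f s w ≠ 0 → s ≤ w) (s : ι) :
    Pi.single s 1 ∈ Submodule.span K (Set.range f) := by
  induction s using WellFoundedGT.induction with
  | _ s ih =>
  set rest := ∑ w ∈ Finset.univ.erase s, f s w • Pi.single (M := fun _ => K) w 1
  have hdecomp : f s = f s s • Pi.single s 1 + rest := by
    rw [add_comm, Finset.sum_erase_add _ _ (Finset.mem_univ s)]
    ext w
    simp [Pi.single_apply]
  have hrest : rest ∈ Submodule.span K (Set.range f) := by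
    refine Submodule.sum_mem _ fun w hw => ?_
    by_cases h : f s w = 0
    · simp [h]
    · have hsw : s < w := (htri s w h).lt_of_ne (Finset.ne_of_mem_erase hw).symm
      exact Submodule.smul_mem _ _ (ih w hsw)
  rw [← inv_smul_smul₀ (hdiag s) (Pi.single s 1), ← add_sub_cancel_right (f s s • _) rest,
    ← hdecomp]
  exact Submodule.smul_mem _ _ (sub_mem (Submodule.subset_span ⟨s, rfl⟩) hrest)

theorem Fin.monotone_cons {α : Type*} [Preorder α] {n : ℕ} {a : α} {f : Fin n → α}
    (hf : Monotone f) (ha : ∀ j, a ≤ f j) : Monotone (Fin.cons a f : Fin (n + 1) → α) := by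
  intro x y hxy
  induction x using Fin.cases with
  | zero =>
    induction y using Fin.cases with
    | zero => exact le_rfl
    | succ y => simpa using ha y
  | succ x =>
    induction y using Fin.cases with
    | zero => exact absurd hxy (by simp)
    | succ y => simpa using hf (Fin.succ_le_succ_iff.1 hxy)

namespace MvPolynomial

variable {R : Type*} [CommRing R] {n : ℕ}

theorem eval_eval_C_finSuccEquiv (P : MvPolynomial (Fin (n + 1)) R) (c : R) (g : Fin n → R) :
    eval g ((finSuccEquiv R n P).eval (C c)) = eval (Fin.cons c g) P := by
  rw [eval_eq_eval_mv_eval', Polynomial.eval, Polynomial.hom_eval₂,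
    Polynomial.eval₂_eq_eval_map]
  simp

theorem totalDegree_eval_C_finSuccEquiv_le (P : MvPolynomial (Fin (n + 1)) R) (c : R) :
    ((finSuccEquiv R n P).eval (C c)).totalDegree ≤ P.totalDegree := by
  rw [Polynomial.eval_eq_sum_range]
  refine totalDegree_finsetSum_le fun k _ => ?_
  by_cases hk : (finSuccEquiv R n P).coeff k = 0
  · simp [hk]
  calc ((finSuccEquiv R n P).coeff k * C c ^ k).totalDegree
      ≤ ((finSuccEquiv R n P).coeff k).totalDegree + (C c ^ k).totalDegree :=
        totalDegree_mul _ _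
    _ ≤ ((finSuccEquiv R n P).coeff k).totalDegree + k := by
        rw [← map_pow, totalDegree_C]; omega
    _ ≤ P.totalDegree := totalDegree_coeff_finSuccEquiv_add_le P k hk

theorem X_zero_sub_C_dvd_of_eval_C_finSuccEquiv_eq_zero {P : MvPolynomial (Fin (n + 1)) R}
    {c : R} (h : (finSuccEquiv R n P).eval (C c) = 0) : X 0 - C c ∣ P := by
  have : finSuccEquiv R n (X 0 - C c) ∣ finSuccEquiv R n P := by
    rw [map_sub, finSuccEquiv_X_zero, ← algebraMap_eq, AlgEquiv.commutes,
      Polynomial.algebraMap_apply, algebraMap_eq]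
    exact Polynomial.dvd_iff_isRoot.2 h
  exact (map_dvd_iff (finSuccEquiv R n)).1 this

variable {σ : Type*} [Nontrivial R]

theorem totalDegree_X_sub_C (j : σ) (c : R) : (X j - C c : MvPolynomial σ R).totalDegree = 1 := by
  rw [sub_eq_add_neg, ← map_neg, totalDegree_add_eq_left_of_totalDegree_lt] <;>
    simp [totalDegree_X]

theorem X_sub_C_ne_zero (j : σ) (c : R) : (X j - C c : MvPolynomial σ R) ≠ 0 := fun h => by
  simpa [h] using totalDegree_X_sub_C j c

end MvPolynomial

section Interpolation

open MvPolynomial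

variable {F : Type*} [Field F] {q : ℕ} {i : Fin q → F}

theorem eq_zero_of_eval_monotone_eq_zero (hi : Function.Injective i) {n : ℕ} (a : ℕ)
    (P : MvPolynomial (Fin n) F) (hdeg : P.totalDegree < q - a)
    (hP : ∀ w : Fin n → Fin q, Monotone w → (∀ j, a ≤ (w j : ℕ)) →
      eval (i ∘ w) P = 0) :
    P = 0 := by
  induction n generalizing a with
  | zero =>
    obtain ⟨c, rfl⟩ := C_surjective (Fin 0) P
    simpa using hP Fin.elim0 (fun x => x.elim0) (fun j => j.elim0)
  | succ n ihn =>
    obtain ⟨d, hd⟩ : ∃ d, q - a = d := ⟨_, rfl⟩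
    induction d generalizing a P with
    | zero => omega
    | succ d ihd =>
      have ha : a < q := by omega
      set c := i ⟨a, ha⟩
      have hslice : (finSuccEquiv F n P).eval (C c) = 0 := by
        refine ihn a _ ((totalDegree_eval_C_finSuccEquiv_le P c).trans_lt hdeg) fun w hw haw => ?_
        rw [eval_eval_C_finSuccEquiv, ← Fin.comp_cons]
        exact hP _ (Fin.monotone_cons hw haw) (Fin.cases le_rfl haw)
      obtain ⟨P', rfl⟩ := X_zero_sub_C_dvd_of_eval_C_finSuccEquiv_eq_zero hslice
      rcases eq_or_ne P' 0 with rfl | hP'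
      · rw [mul_zero]
      rw [ihd (a + 1) P' ?_ ?_ (by omega), mul_zero]
      · rw [totalDegree_mul_of_isDomain (X_sub_C_ne_zero _ _) hP', totalDegree_X_sub_C] at hdeg
        omega
      · intro w hw haw
        have hw0 : w 0 ≠ ⟨a, ha⟩ := fun h => by simpa [h] using haw 0
        have hPw := hP w hw fun j => (Nat.le_succ a).trans (haw j)
        rw [map_mul, map_sub, eval_X, eval_C] at hPw
        exact (mul_eq_zero.1 hPw).resolve_left (sub_ne_zero.2 (hi.ne hw0))

variable {n : ℕ}

/-- For monotone `s`, `layer s j` is the interval `[s (j - 1), s j)`, where `s (-1) = 0`. -/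
def layer (s : Fin n → Fin q) (j : Fin n) : Finset (Fin q) :=
  {u | u < s j ∧ ∀ k < j, s k ≤ u}

theorem disjoint_layer (s : Fin n → Fin q) {j k : Fin n} (hjk : j ≠ k) :
    Disjoint (layer s j) (layer s k) := by
  wlog hlt : j < k generalizing j k
  · exact (this hjk.symm ((Ne.le_iff_lt hjk.symm).1 (not_lt.1 hlt))).symm
  refine Finset.disjoint_left.2 fun u hj hk => ?_
  simp only [layer, Finset.mem_filter, Finset.mem_univ, true_and] at hj hk
  exact (hj.1.trans_le (hk.2 j hlt)).false

theorem sum_card_layer_le (s : Fin n → Fin q) : ∑ j, (layer s j).card ≤ q - 1 := by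
  rw [← Finset.card_biUnion fun j _ k _ hjk => disjoint_layer s hjk]
  calc (Finset.univ.biUnion (layer s)).card ≤ (Finset.range (q - 1)).card := by
        refine Finset.card_le_card_of_injOn Fin.val (fun u hu => ?_) Fin.val_injective.injOn
        obtain ⟨j, -, hu⟩ := Finset.mem_biUnion.1 (Finset.mem_coe.1 hu)
        have hlt : u < s j := (Finset.mem_filter.1 hu).2.1
        rw [Finset.mem_coe, Finset.mem_range]
        have := (s j).isLt
        omega
    _ = q - 1 := Finset.card_range _

variable (i) in
noncomputable def triangularPoly (s : Fin n → Fin q) : MvPolynomial (Fin n) F :=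
  ∏ j, ∏ u ∈ layer s j, (X j - C (i u))

theorem eval_triangularPoly (s w : Fin n → Fin q) :
    eval (i ∘ w) (triangularPoly i s) = ∏ j, ∏ u ∈ layer s j, (i (w j) - i u) := by
  simp [triangularPoly]

variable (i) in
theorem totalDegree_triangularPoly_le (s : Fin n → Fin q) :
    (triangularPoly i s).totalDegree ≤ q - 1 := by
  refine (totalDegree_finsetProd _ _).trans ((Finset.sum_le_sum fun j _ => ?_).trans
    (sum_card_layer_le s))
  refine (totalDegree_finsetProd _ _).trans ?_
  simp [totalDegree_X_sub_C]

theorem eval_triangularPoly_self_ne_zero (hi : Function.Injective i) (s : Fin n → Fin q) :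
    eval (i ∘ s) (triangularPoly i s) ≠ 0 := by
  rw [eval_triangularPoly]
  refine Finset.prod_ne_zero_iff.2 fun j _ => Finset.prod_ne_zero_iff.2 fun u hu => ?_
  simp only [layer, Finset.mem_filter] at hu
  exact sub_ne_zero.2 fun h => hu.2.1.ne' (hi h)

theorem eval_triangularPoly_eq_zero_of_not_le {s w : Fin n → Fin q} (hw : Monotone w)
    (hsw : ¬ s ≤ w) : eval (i ∘ w) (triangularPoly i s) = 0 := by
  obtain ⟨j₀, hj₀⟩ : ∃ j, w j < s j := by simpa [Pi.le_def] using hsw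
  obtain ⟨j, hj, hmin⟩ := wellFounded_lt.has_min {j | w j < s j} ⟨j₀, hj₀⟩
  have hwj : w j ∈ layer s j := by
    simp only [layer, Finset.mem_filter, Finset.mem_univ, true_and]
    exact ⟨hj, fun k hk => (not_lt.1 fun h => hmin k h hk).trans (hw hk.le)⟩
  rw [eval_triangularPoly]
  exact Finset.prod_eq_zero (Finset.mem_univ j) (Finset.prod_eq_zero hwj (sub_self _))

theorem exists_totalDegree_le_eval_monotone_eq_single (hi : Function.Injective i)
    (s : Fin n → Fin q) (hs : Monotone s) :
    ∃ P : MvPolynomial (Fin n) F, P.totalDegree ≤ q - 1 ∧ eval (i ∘ s) P = 1 ∧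
      ∀ w, Monotone w → w ≠ s → eval (i ∘ w) P = 0 := by
  classical
  let ev : MvPolynomial (Fin n) F →ₗ[F] ({w : Fin n → Fin q // Monotone w} → F) :=
    LinearMap.pi fun w => (aeval (i ∘ w.1)).toLinearMap
  have hspan : Submodule.span F
      (Set.range fun t : {w : Fin n → Fin q // Monotone w} => ev (triangularPoly i t.1)) ≤
        (restrictTotalDegree (Fin n) F (q - 1)).map ev := by
    rw [Submodule.span_le]
    rintro _ ⟨t, rfl⟩
    exact ⟨_, (mem_restrictTotalDegree _ _ _).2 (totalDegree_triangularPoly_le i t.1), rfl⟩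
  obtain ⟨P, hPdeg, hPev⟩ := hspan (Pi.single_mem_span_of_triangular
    (fun t : {w : Fin n → Fin q // Monotone w} => ev (triangularPoly i t.1))
    (fun t => eval_triangularPoly_self_ne_zero hi t.1)
    (fun t w h => not_not.1 (mt (eval_triangularPoly_eq_zero_of_not_le w.2) h)) ⟨s, hs⟩)
  refine ⟨P, (mem_restrictTotalDegree _ _ _).1 hPdeg, ?_, fun w hw hne => ?_⟩
  · simpa [ev] using congrFun hPev ⟨s, hs⟩
  · simpa [ev, Subtype.ext_iff, hne] using congrFun hPev ⟨w, hw⟩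

theorem le_totalDegree_of_eval_monotone_eq_single (hi : Function.Injective i) {s : Fin n → Fin q}
    (j : Fin n) {P : MvPolynomial (Fin n) F} (hPs : eval (i ∘ s) P = 1)
    (hPw : ∀ w, Monotone w → w ≠ s → eval (i ∘ w) P = 0) : q - 1 ≤ P.totalDegree := by
  by_contra! hlt
  have hzero : (X j - C (i (s j))) * P = 0 := by
    refine eq_zero_of_eval_monotone_eq_zero hi 0 _ ?_ fun w hw _ => ?_
    · calc _ ≤ (X j - C (i (s j))).totalDegree + P.totalDegree := totalDegree_mul _ _
        _ < q - 0 := by rw [totalDegree_X_sub_C]; omega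
    · rcases eq_or_ne w s with rfl | hne
      · simp
      · simp [hPw w hw hne]
  simp [(mul_eq_zero.1 hzero).resolve_left (X_sub_C_ne_zero _ _)] at hPs

end Interpolation

theorem stmt_9 {F : Type*} [Field F] (n q : ℕ) (hn : 1 ≤ n) (hq : 1 ≤ q)
    (i : Fin q → F) (hi : Function.Injective i)
    (s : Fin n → Fin q) (hs : Monotone s) :
    (∃! P : MvPolynomial (Fin n) F, P.totalDegree ≤ q - 1 ∧
      MvPolynomial.eval (fun j => i (s j)) P = 1 ∧
      ∀ w : Fin n → Fin q, Monotone w → w ≠ s →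
        MvPolynomial.eval (fun j => i (w j)) P = 0) ∧
    (∀ P : MvPolynomial (Fin n) F,
      MvPolynomial.eval (fun j => i (s j)) P = 1 →
      (∀ w : Fin n → Fin q, Monotone w → w ≠ s →
        MvPolynomial.eval (fun j => i (w j)) P = 0) →
      q - 1 ≤ P.totalDegree) := by
  obtain ⟨P, hPdeg, hPs, hPw⟩ := exists_totalDegree_le_eval_monotone_eq_single hi s hs
  refine ⟨⟨P, ⟨hPdeg, hPs, hPw⟩, fun P' ⟨hP'deg, hP's, hP'w⟩ => ?_⟩,
    fun P' hP's hP'w => le_totalDegree_of_eval_monotone_eq_single hi ⟨0, hn⟩ hP's hP'w⟩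
  refine sub_eq_zero.1 (eq_zero_of_eval_monotone_eq_zero hi 0 _
    ((MvPolynomial.totalDegree_sub _ _).trans_lt (by omega)) fun w hw _ => ?_)
  rw [map_sub, sub_eq_zero]
  rcases eq_or_ne w s with rfl | hne
  · exact hP's.trans hPs.symm
  · exact (hP'w w hw hne).trans (hPw w hw hne).symm
end
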